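/- In the ICW model, the error term R̃_2 := (√n/√χ̃_n)·√(E[W_n]/β)·G_n'(√(β/E[W_n])·m̃_n) − G_n''(x_n*)·X̃_n satisfies E_{μ_n}[|R̃_2|] ≤ 2·√χ̃_n·(β/E[W_n])²·E[W_n³]·E_{μ_n}[X̃_n²]·n^{−1/2}. -/

import Mathlib

/-!
At the fixed point `x_n*` one has `M̃_n = (1/n) ∑ wᵢ tanh tᵢ*`, and evaluating `G_n'` at
`√(β/E[W_n]) m̃_n` shifts every argument to `tᵢ* + sᵢ` with `sᵢ = (β/E[W_n]) wᵢ (m̃_n - M̃_n)`.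
Hence `R̃_2` is `-√n/√χ̃_n` times the average of `wᵢ` times the second-order Taylor remainder
`tanh (tᵢ* + sᵢ) - tanh tᵢ* - tanh' tᵢ* · sᵢ`. Since `tanh' = 1 - tanh²` is `2`-Lipschitz, each
remainder is at most `2 sᵢ²`, which bounds `|R̃_2|` pointwise by a multiple of `X̃_n²` involving
`E[W_n³]`; averaging over `μ_n` gives the claim.
-/

open Real BigOperators Finset MeasureTheory Filter ProbabilityTheory Topology

noncomputable section

namespace ICW

/-- The real spin value associated to a Boolean: `true ↦ 1`, `false ↦ -1`. -/
def spin (b : Bool) : ℝ := if b then 1 else -1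

/-- `E[W_n^k] = (1/n) ∑_i w_i^k`. -/
def EWk (n : ℕ) (w : Fin n → ℝ) (k : ℕ) : ℝ := (1 / n : ℝ) * ∑ i, (w i) ^ k

/-- `E[W_n] = (1/n) ∑_i w_i`. -/
def EW (n : ℕ) (w : Fin n → ℝ) : ℝ := (1 / n : ℝ) * ∑ i, w i

/-- The (negative) Hamiltonian of the inhomogeneous Curie–Weiss model. -/
def ham (n : ℕ) (w : Fin n → ℝ) (β h : ℝ) (σ : Fin n → Bool) : ℝ :=
  β / (2 * ∑ i, w i) * (∑ i, w i * spin (σ i)) ^ 2 + h * ∑ i, spin (σ i)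

/-- Unnormalized Boltzmann–Gibbs weight. -/
def wt (n : ℕ) (w : Fin n → ℝ) (β h : ℝ) (σ : Fin n → Bool) : ℝ :=
  Real.exp (ham n w β h σ)

/-- Partition function `Z_n`. -/
def Z (n : ℕ) (w : Fin n → ℝ) (β h : ℝ) : ℝ := ∑ σ : Fin n → Bool, wt n w β h σ

/-- Expectation under the ICW measure `μ_n`. -/
def icwE (n : ℕ) (w : Fin n → ℝ) (β h : ℝ) (f : (Fin n → Bool) → ℝ) : ℝ :=
  (∑ σ : Fin n → Bool, wt n w β h σ * f σ) / Z n w β h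

open Classical in
/-- Probability of an event under the ICW measure `μ_n`. -/
def icwP (n : ℕ) (w : Fin n → ℝ) (β h : ℝ) (A : (Fin n → Bool) → Prop) : ℝ :=
  icwE n w β h (fun σ => if A σ then 1 else 0)

/-- Magnetization `m_n`. -/
def mn (n : ℕ) (σ : Fin n → Bool) : ℝ := (1 / n : ℝ) * ∑ i, spin (σ i)

/-- Weighted magnetization `m̃_n`. -/
def mtil (n : ℕ) (w : Fin n → ℝ) (σ : Fin n → Bool) : ℝ :=
  (1 / n : ℝ) * ∑ i, w i * spin (σ i)

/-- Weighted magnetization leaving out spin `i`, `m̃_n^i`. -/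
def mtilI (n : ℕ) (w : Fin n → ℝ) (σ : Fin n → Bool) (i : Fin n) : ℝ :=
  (1 / n : ℝ) * ∑ j ∈ Finset.univ.erase i, w j * spin (σ j)

/-- Argument `√(β/E[W_n])·w_i·x + h`. -/
def arg (n : ℕ) (w : Fin n → ℝ) (β h x : ℝ) (i : Fin n) : ℝ :=
  Real.sqrt (β / EW n w) * w i * x + h

/-- `G_n(x)`. -/
def Gfun (n : ℕ) (w : Fin n → ℝ) (β h : ℝ) (x : ℝ) : ℝ :=
  x ^ 2 / 2 - (1 / n : ℝ) * ∑ i, Real.log (Real.cosh (arg n w β h x i))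

/-- `G_n(x; s)` (with tilted argument `x+s`). -/
def GfunS (n : ℕ) (w : Fin n → ℝ) (β h : ℝ) (x s : ℝ) : ℝ :=
  x ^ 2 / 2 - (1 / n : ℝ) * ∑ i, Real.log (Real.cosh (arg n w β h (x + s) i))

/-- `G_n'(x)`. -/
def Gfun' (n : ℕ) (w : Fin n → ℝ) (β h : ℝ) (x : ℝ) : ℝ :=
  x - (1 / n : ℝ) * ∑ i, Real.sqrt (β / EW n w) * w i * Real.tanh (arg n w β h x i)

/-- `G_n''(x)`. -/
def Gfun'' (n : ℕ) (w : Fin n → ℝ) (β h : ℝ) (x : ℝ) : ℝ :=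
  1 - β / EW n w * ((1 / n : ℝ) * ∑ i, (1 - Real.tanh (arg n w β h x i) ^ 2) * (w i) ^ 2)

/-- `x` has the same sign as `h` (and is `0` when `h = 0`). -/
def SameSign (h x : ℝ) : Prop :=
  (0 < h ∧ 0 < x) ∨ (h < 0 ∧ x < 0) ∨ (h = 0 ∧ x = 0)

/-- `M_n`, defined from a solution `x` of the fixed point equation. -/
def Mn (n : ℕ) (w : Fin n → ℝ) (β h x : ℝ) : ℝ :=
  (1 / n : ℝ) * ∑ i, Real.tanh (arg n w β h x i)

/-- The susceptibility `χ_n`, defined from a solution `x` of the fixed point equation. -/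
def chiN (n : ℕ) (w : Fin n → ℝ) (β h x : ℝ) : ℝ :=
  1 - (1 / n : ℝ) * ∑ i, Real.tanh (arg n w β h x i) ^ 2
    + β / EW n w * ((1 / n : ℝ) * ∑ i, (1 - Real.tanh (arg n w β h x i) ^ 2) * w i) ^ 2
      / Gfun'' n w β h x

/-- `M̃_n`. -/
def Mtil (n : ℕ) (w : Fin n → ℝ) (β x : ℝ) : ℝ := Real.sqrt (EW n w / β) * x

/-- `χ̃_n`. -/
def chiTil (n : ℕ) (w : Fin n → ℝ) (β h x : ℝ) : ℝ :=
  ((1 / n : ℝ) * ∑ i, (1 - Real.tanh (arg n w β h x i) ^ 2) * (w i) ^ 2) / Gfun'' n w β h x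

/-- The normalized magnetization `X_n` (as a function of the configuration),
where `x` is the relevant solution of the fixed point equation. -/
def Xn (n : ℕ) (w : Fin n → ℝ) (β h x : ℝ) (σ : Fin n → Bool) : ℝ :=
  Real.sqrt n * (mn n σ - Mn n w β h x) / Real.sqrt (chiN n w β h x)

/-- The normalized weighted magnetization `X̃_n`. -/
def Xtil (n : ℕ) (w : Fin n → ℝ) (β h x : ℝ) (σ : Fin n → Bool) : ℝ :=
  Real.sqrt n * (mtil n w σ - Mtil n w β x) / Real.sqrt (chiTil n w β h x)

/-- The standard normal cumulative distribution function. -/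
def stdGaussCDF (z : ℝ) : ℝ := ((gaussianReal 0 1) (Set.Iic z)).toReal

/-- Kolmogorov distance between the law of `X` under `μ_n` and the standard normal law. -/
def dK (n : ℕ) (w : Fin n → ℝ) (β h : ℝ) (X : (Fin n → Bool) → ℝ) : ℝ :=
  ⨆ z : ℝ, |icwP n w β h (fun σ => X σ ≤ z) - stdGaussCDF z|

/-- Weight regularity condition (i): the empirical weight distribution converges weakly to
the law `ν` of `W`, which is a probability measure with `E[W] > 0`. -/
def WeightRegI (w : (n : ℕ) → Fin n → ℝ) (ν : Measure ℝ) : Prop :=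
  (∀ n i, 0 < w n i) ∧ IsProbabilityMeasure ν ∧
    (∀ f : BoundedContinuousFunction ℝ ℝ,
      Tendsto (fun n : ℕ => (1 / n : ℝ) * ∑ i, f (w n i)) atTop (𝓝 (∫ x, f x ∂ν))) ∧
    Integrable (fun x => x) ν ∧ 0 < ∫ x, x ∂ν

/-- Weight regularity condition (ii): `E[W_n²] → E[W²] < ∞`. -/
def WeightRegII (w : (n : ℕ) → Fin n → ℝ) (ν : Measure ℝ) : Prop :=
  Integrable (fun x => x ^ 2) ν ∧
    Tendsto (fun n => EWk n (w n) 2) atTop (𝓝 (∫ x, x ^ 2 ∂ν))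

/-- Weight regularity condition (iii): `E[W_n³] → E[W³] < ∞`. -/
def WeightRegIII (w : (n : ℕ) → Fin n → ℝ) (ν : Measure ℝ) : Prop :=
  Integrable (fun x => x ^ 3) ν ∧
    Tendsto (fun n => EWk n (w n) 3) atTop (𝓝 (∫ x, x ^ 3 ∂ν))

/-- The critical inverse temperature `β_c = E[W]/E[W²]`. -/
def betaC (ν : Measure ℝ) : ℝ := (∫ x, x ∂ν) / (∫ x, x ^ 2 ∂ν)

/-- The uniqueness regime `U`. -/
def Uniq (ν : Measure ℝ) (β h : ℝ) : Prop :=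
  (0 ≤ β ∧ h ≠ 0) ∨ (0 < β ∧ β < betaC ν ∧ h = 0)

/-- Probability that spin `i` equals `+1` given the remaining spins. -/
def pPlus (n : ℕ) (w : Fin n → ℝ) (β h : ℝ) (σ : Fin n → Bool) (i : Fin n) : ℝ :=
  wt n w β h (Function.update σ i true) /
    (wt n w β h (Function.update σ i true) + wt n w β h (Function.update σ i false))

/-- Conditional expectation given `F_n` (the σ-algebra generated by `σ`) of a function of
`(σ, I, σ'_I)`, where `I` is uniform on `[n]` and `σ'_I` is resampled from the conditional
distribution of the `I`-th spin given the others. -/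
def condAvg (n : ℕ) (w : Fin n → ℝ) (β h : ℝ)
    (f : (Fin n → Bool) → Fin n → Bool → ℝ) (σ : Fin n → Bool) : ℝ :=
  (1 / n : ℝ) * ∑ i, (pPlus n w β h σ i * f σ i true + (1 - pPlus n w β h σ i) * f σ i false)

/-- The increment `X_n − X'_n` as a function of `(σ, I, σ'_I)`. -/
def XnD (n : ℕ) (w : Fin n → ℝ) (β h x : ℝ) (σ : Fin n → Bool) (i : Fin n) (b : Bool) : ℝ :=
  (spin (σ i) - spin b) / (Real.sqrt n * Real.sqrt (chiN n w β h x))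

/-- The increment `X̃_n − X̃'_n` as a function of `(σ, I, σ'_I)`. -/
def XtilD (n : ℕ) (w : Fin n → ℝ) (β h x : ℝ) (σ : Fin n → Bool) (i : Fin n) (b : Bool) : ℝ :=
  w i * (spin (σ i) - spin b) / (Real.sqrt n * Real.sqrt (chiTil n w β h x))

/-- The constant `c` in the regression equation. -/
def cconst (n : ℕ) (w : Fin n → ℝ) (β h x : ℝ) : ℝ :=
  Real.sqrt (chiTil n w β h x) / Real.sqrt (chiN n w β h x) * (β / EW n w) *
    ((1 / n : ℝ) * ∑ i, (1 - Real.tanh (arg n w β h x i) ^ 2) * w i)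

end ICW

namespace ICW

/-- Error term `R̃_2` (with `1/σ² = G_n''(x_n*)`). -/
def Rtil2 (n : ℕ) (w : Fin n → ℝ) (β h x : ℝ) (σ : Fin n → Bool) : ℝ :=
  Real.sqrt n / Real.sqrt (chiTil n w β h x) * Real.sqrt (EW n w / β) *
    Gfun' n w β h (Real.sqrt (β / EW n w) * mtil n w σ)
  - Gfun'' n w β h x * Xtil n w β h x σ

end ICW

namespace Real

theorem hasDerivAt_tanh (t : ℝ) : HasDerivAt tanh (1 - tanh t ^ 2) t := by
  have hcosh := (cosh_pos t).ne'
  rw [show tanh = sinh / cosh from funext tanh_eq_sinh_div_cosh]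
  refine ((hasDerivAt_sinh t).div (hasDerivAt_cosh t) hcosh).congr_deriv ?_
  simp only [Pi.div_apply]
  field_simp

theorem abs_tanh_sub_tanh_le (p q : ℝ) : |tanh p - tanh q| ≤ |p - q| := by
  simpa using convex_univ.norm_image_sub_le_of_norm_hasDerivWithin_le (C := 1)
    (fun z _ => (hasDerivAt_tanh z).hasDerivWithinAt)
    (fun z _ => by
      rw [norm_eq_abs, abs_of_pos (by linarith [tanh_sq_lt_one z] : 0 < 1 - tanh z ^ 2)]
      linarith [sq_nonneg (tanh z)])
    (Set.mem_univ q) (Set.mem_univ p)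

theorem abs_tanh_deriv_sub_le (a b : ℝ) :
    |(1 - tanh a ^ 2) - (1 - tanh b ^ 2)| ≤ 2 * |a - b| := by
  have hsum : |tanh b + tanh a| ≤ 2 := (abs_add_le _ _).trans
    (by linarith [abs_tanh_lt_one a, abs_tanh_lt_one b])
  calc |(1 - tanh a ^ 2) - (1 - tanh b ^ 2)| = |tanh a - tanh b| * |tanh b + tanh a| := by
        rw [← abs_mul, ← abs_neg]; congr 1; ring
    _ ≤ |a - b| * 2 := mul_le_mul (abs_tanh_sub_tanh_le a b) hsum (abs_nonneg _) (abs_nonneg _)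
    _ = 2 * |a - b| := mul_comm _ _

theorem abs_tanh_add_sub_le (t s : ℝ) :
    |tanh (t + s) - tanh t - (1 - tanh t ^ 2) * s| ≤ 2 * s ^ 2 := by
  let g : ℝ → ℝ := fun u => tanh (t + u) - (1 - tanh t ^ 2) * u
  have hg : ∀ u ∈ Set.uIcc 0 s,
      HasDerivWithinAt g ((1 - tanh (t + u) ^ 2) - (1 - tanh t ^ 2)) (Set.uIcc 0 s) u := by
    intro u _
    have := ((hasDerivAt_tanh (t + u)).comp u ((hasDerivAt_id u).const_add t)).sub
      ((hasDerivAt_id u).const_mul (1 - tanh t ^ 2))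
    simp only [mul_one] at this
    exact this.hasDerivWithinAt
  have hbound : ∀ u ∈ Set.uIcc 0 s, ‖(1 - tanh (t + u) ^ 2) - (1 - tanh t ^ 2)‖ ≤ 2 * |s| := by
    intro u hu
    rw [norm_eq_abs]
    refine (abs_tanh_deriv_sub_le _ _).trans ?_
    simpa using Set.abs_sub_left_of_mem_uIcc hu
  have := (convex_uIcc 0 s).norm_image_sub_le_of_norm_hasDerivWithin_le hg hbound
    Set.left_mem_uIcc Set.right_mem_uIcc
  simp only [g, norm_eq_abs, add_zero, mul_zero, sub_zero] at this
  calc _ = |tanh (t + s) - (1 - tanh t ^ 2) * s - tanh t| := by ring_nf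
    _ ≤ 2 * |s| * |s| := this
    _ = 2 * s ^ 2 := by rw [mul_assoc, ← abs_mul, ← sq, abs_sq]

theorem abs_sum_mul_tanh_add_sub_le {ι : Type*} (s : Finset ι) (t w : ι → ℝ)
    (hw : ∀ i ∈ s, 0 ≤ w i) (c : ℝ) :
    |∑ i ∈ s, w i * (tanh (t i + c * w i) - tanh (t i) - (1 - tanh (t i) ^ 2) * (c * w i))|
      ≤ 2 * c ^ 2 * ∑ i ∈ s, w i ^ 3 := by
  rw [Finset.mul_sum]
  refine (Finset.abs_sum_le_sum_abs _ _).trans (Finset.sum_le_sum fun i hi => ?_)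
  rw [abs_mul, abs_of_nonneg (hw i hi)]
  calc w i * |tanh (t i + c * w i) - tanh (t i) - (1 - tanh (t i) ^ 2) * (c * w i)|
      ≤ w i * (2 * (c * w i) ^ 2) := by gcongr; exacts [hw i hi, abs_tanh_add_sub_le _ _]
    _ = 2 * c ^ 2 * w i ^ 3 := by ring

end Real

namespace ICW

section GibbsExpectation

variable {n : ℕ} {w : Fin n → ℝ} {β h : ℝ}

lemma Z_nonneg : 0 ≤ Z n w β h :=
  Finset.sum_nonneg fun _ _ => (Real.exp_pos _).le

lemma icwE_mono {f g : (Fin n → Bool) → ℝ} (hfg : ∀ σ, f σ ≤ g σ) :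
    icwE n w β h f ≤ icwE n w β h g :=
  div_le_div_of_nonneg_right
    (Finset.sum_le_sum fun σ _ => mul_le_mul_of_nonneg_left (hfg σ) (Real.exp_pos _).le)
    Z_nonneg

lemma icwE_const_mul (c : ℝ) (f : (Fin n → Bool) → ℝ) :
    icwE n w β h (fun σ => c * f σ) = c * icwE n w β h f := by
  simp only [icwE, mul_left_comm _ c, ← Finset.mul_sum, mul_div_assoc]

end GibbsExpectation

section FixedPoint

variable {n : ℕ} {w : Fin n → ℝ} {β h x : ℝ}

lemma EW_pos (hn : 0 < n) (hw : ∀ i, 0 < w i) : 0 < EW n w :=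
  mul_pos (by positivity) (Finset.sum_pos (fun i _ => hw i) ⟨⟨0, hn⟩, Finset.mem_univ _⟩)

lemma sqrt_EW_div_mul_sqrt_div_EW (hβ : 0 < β) (hE : 0 < EW n w) :
    √(EW n w / β) * √(β / EW n w) = 1 := by
  rw [← inv_div, Real.sqrt_inv, inv_mul_cancel₀ (Real.sqrt_pos.mpr (by positivity)).ne']

lemma Mtil_eq_of_Gfun'_eq_zero (hβ : 0 < β) (hE : 0 < EW n w) (hx : Gfun' n w β h x = 0) :
    Mtil n w β x = (1 / n : ℝ) * ∑ i, w i * tanh (arg n w β h x i) := by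
  have hfix : x = √(β / EW n w) * ((1 / n : ℝ) * ∑ i, w i * tanh (arg n w β h x i)) := by
    simp only [Gfun', mul_assoc, ← Finset.mul_sum] at hx
    linear_combination hx
  rw [Mtil]
  linear_combination √(EW n w / β) * hfix
    + (1 / n : ℝ) * (∑ i, w i * tanh (arg n w β h x i)) * sqrt_EW_div_mul_sqrt_div_EW hβ hE

lemma arg_sqrt_div_mul (hβ : 0 < β) (hE : 0 < EW n w) (m : ℝ) (i : Fin n) :
    arg n w β h (√(β / EW n w) * m) i
      = arg n w β h x i + β / EW n w * (m - Mtil n w β x) * w i := by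
  have hsq : √(β / EW n w) ^ 2 = β / EW n w := Real.sq_sqrt (by positivity)
  simp only [arg, Mtil]
  linear_combination (w i * m - √(EW n w / β) * w i * x) * hsq
    + √(β / EW n w) * w i * x * sqrt_EW_div_mul_sqrt_div_EW hβ hE

end FixedPoint

section ErrorTerm

variable {n : ℕ} {w : Fin n → ℝ} {β h x : ℝ}

lemma Rtil2_eq_neg_sum (hβ : 0 < β) (hE : 0 < EW n w) (hx : Gfun' n w β h x = 0)
    (σ : Fin n → Bool) :
    let c := β / EW n w * (mtil n w σ - Mtil n w β x)
    Rtil2 n w β h x σ = -(√n / √(chiTil n w β h x) * ((1 / n : ℝ) *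
      ∑ i, w i * (tanh (arg n w β h x i + c * w i) - tanh (arg n w β h x i)
        - (1 - tanh (arg n w β h x i) ^ 2) * (c * w i)))) := by
  intro c
  have hc : c = β / EW n w * (mtil n w σ - Mtil n w β x) := rfl
  clear_value c
  have hG' : √(EW n w / β) * Gfun' n w β h (√(β / EW n w) * mtil n w σ)
      = mtil n w σ - (1 / n : ℝ) * ∑ i, w i * tanh (arg n w β h x i + c * w i) := by
    simp only [Gfun', arg_sqrt_div_mul (x := x) hβ hE, ← hc, mul_assoc, ← Finset.mul_sum]
    linear_combination (mtil n w σ - (1 / n : ℝ) * ∑ i, w i * tanh (arg n w β h x i + c * w i))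
      * sqrt_EW_div_mul_sqrt_div_EW hβ hE
  have hlin : ∑ i, w i * ((1 - tanh (arg n w β h x i) ^ 2) * (c * w i))
      = c * ∑ i, (1 - tanh (arg n w β h x i) ^ 2) * w i ^ 2 := by
    rw [Finset.mul_sum]
    exact Finset.sum_congr rfl fun i _ => by ring
  simp only [mul_sub, Finset.sum_sub_distrib, hlin]
  rw [Rtil2, mul_assoc _ √(EW n w / β), hG', Xtil, Gfun'', hc, Mtil_eq_of_Gfun'_eq_zero hβ hE hx]
  ring

lemma abs_Rtil2_le (hn : 0 < n) (hw : ∀ i, 0 < w i) (hβ : 0 < β) (hx : Gfun' n w β h x = 0)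
    (σ : Fin n → Bool) :
    |Rtil2 n w β h x σ| ≤ 2 * √(chiTil n w β h x) * (β / EW n w) ^ 2 * EWk n w 3 / √n
      * Xtil n w β h x σ ^ 2 := by
  have hE := EW_pos hn hw
  set δ := mtil n w σ - Mtil n w β x
  rw [Rtil2_eq_neg_sum hβ hE hx, abs_neg, abs_mul, abs_mul,
    abs_of_nonneg (by positivity : 0 ≤ √n / √(chiTil n w β h x)),
    abs_of_nonneg (by positivity : (0 : ℝ) ≤ 1 / n)]
  calc _ ≤ √n / √(chiTil n w β h x)
          * ((1 / n : ℝ) * (2 * (β / EW n w * δ) ^ 2 * ∑ i, w i ^ 3)) := by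
        gcongr
        exact Real.abs_sum_mul_tanh_add_sub_le _ _ _ (fun i _ => (hw i).le) _
    _ = _ := by
      have hn' : √n ≠ 0 := by positivity
      rcases eq_or_ne √(chiTil n w β h x) 0 with hχ | hχ
      · -- `χ̃_n ≤ 0`: both sides vanish because `x / 0 = 0`.
        simp [hχ]
      · rw [Xtil, EWk]
        field_simp
        ring

end ErrorTerm

theorem Rtil2_bound_general (n : ℕ) (hn : 0 < n) (w : Fin n → ℝ) (hw : ∀ i, 0 < w i)
    (β h : ℝ) (hβ : 0 < β) (x : ℝ) (hx : Gfun' n w β h x = 0) :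
    icwE n w β h (fun σ => |Rtil2 n w β h x σ|)
      ≤ 2 * Real.sqrt (chiTil n w β h x) * (β / EW n w) ^ 2 * EWk n w 3 *
          icwE n w β h (fun σ => Xtil n w β h x σ ^ 2) / Real.sqrt n := by
  calc icwE n w β h (fun σ => |Rtil2 n w β h x σ|)
      ≤ icwE n w β h (fun σ => 2 * √(chiTil n w β h x) * (β / EW n w) ^ 2 * EWk n w 3 / √n
          * Xtil n w β h x σ ^ 2) := icwE_mono (abs_Rtil2_le hn hw hβ hx)
    _ = _ := by rw [icwE_const_mul]; ring

/-- **Bound on the error term `R̃_2`**: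
`E[|R̃_2|] ≤ 2·√χ̃_n·(β/E[W_n])²·E[W_n³]·E[X̃_n²]·n^{−1/2}`. -/
theorem Rtil2_bound (n : ℕ) (hn : 0 < n) (w : Fin n → ℝ) (hw : ∀ i, 0 < w i)
    (β h : ℝ) (hβ : 0 < β) (x : ℝ) (hx : Gfun' n w β h x = 0) (hsign : SameSign h x)
    (hG'' : 0 < Gfun'' n w β h x) :
    icwE n w β h (fun σ => |Rtil2 n w β h x σ|)
      ≤ 2 * Real.sqrt (chiTil n w β h x) * (β / EW n w) ^ 2 * EWk n w 3 *
          icwE n w β h (fun σ => Xtil n w β h x σ ^ 2) / Real.sqrt n :=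
  Rtil2_bound_general n hn w hw β h hβ x hx

end ICW
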